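/- arXiv:1708.03399 — 3 statements merged into one kernel-verified Lean document; each statement's English description precedes it below -/
import Mathlib

section
/- Let f : ℝ → ℝ be continuous with f(0) = 0 such that t ↦ f(t)/|t| is strictly increasing on ℝ \ {0}. Then the map t ↦ (1/2) f(t) t − F(t), where F(t) = ∫_0^t f(s) ds, is strictly increasing on (0, ∞) and strictly decreasing on (−∞, 0). -/
open MeasureTheory Filter Set Topology intervalIntegral

/-- Lemma 2.3(i): if `t ↦ f(t)/|t|` is strictly increasing on `ℝ ∖ {0}`, then
`t ↦ (1/2) f(t) t − F(t)` is strictly increasing on `(0,∞)` and strictly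
decreasing on `(−∞,0)`, where `F(t) = ∫₀ᵗ f`. -/
theorem half_ft_sub_F_mono (f : ℝ → ℝ) (hf : Continuous f) (hf0 : f 0 = 0)
    (hmono : StrictMonoOn (fun t => f t / |t|) {t : ℝ | t ≠ 0}) :
    StrictMonoOn (fun t => (1 / 2) * f t * t - ∫ s in (0 : ℝ)..t, f s)
        (Set.Ioi (0 : ℝ)) ∧
    StrictAntiOn (fun t => (1 / 2) * f t * t - ∫ s in (0 : ℝ)..t, f s)
        (Set.Iio (0 : ℝ)) := by
  have hint : ∀ a b : ℝ, IntervalIntegrable f volume a b :=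
    fun a b => hf.intervalIntegrable a b
  constructor
  · intro a ha b hb hab
    simp only [Set.mem_Ioi] at ha hb
    have key : (∫ s in a..b, f s) ≤ (f b / b) * ((b ^ 2 - a ^ 2) / 2) := by
      have heq : (∫ s in a..b, (f b / b) * s) = (f b / b) * ((b ^ 2 - a ^ 2) / 2) := by
        rw [intervalIntegral.integral_const_mul, integral_id]
      rw [← heq]
      apply intervalIntegral.integral_mono_on hab.le (hint a b)
        ((continuous_const.mul continuous_id).intervalIntegrable a b)
      intro s hs
      have hs0 : 0 < s := lt_of_lt_of_le ha hs.1
      have hle : f s / |s| ≤ f b / |b| :=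
        hmono.monotoneOn (hs0.ne' : s ≠ 0) (hb.ne' : b ≠ 0) hs.2
      rw [abs_of_pos hs0, abs_of_pos hb] at hle
      calc f s = (f s / s) * s := (div_mul_cancel₀ _ hs0.ne').symm
        _ ≤ (f b / b) * s := mul_le_mul_of_nonneg_right hle hs0.le
    have hdiff : (∫ s in (0:ℝ)..b, f s) - ∫ s in (0:ℝ)..a, f s = ∫ s in a..b, f s :=
      intervalIntegral.integral_interval_sub_left (hint 0 b) (hint 0 a)
    have hfa : f a = (f a / a) * a := (div_mul_cancel₀ _ ha.ne').symm
    have hfb : f b = (f b / b) * b := (div_mul_cancel₀ _ hb.ne').symm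
    have hgab : f a / a < f b / b := by
      have h := hmono (ha.ne' : a ≠ 0) (hb.ne' : b ≠ 0) hab
      simpa [abs_of_pos ha, abs_of_pos hb] using h
    simp only
    nlinarith [mul_pos (mul_pos ha ha) (sub_pos.2 hgab)]
  · intro a ha b hb hab
    simp only [Set.mem_Iio] at ha hb
    have key : (f a / (-a)) * ((a ^ 2 - b ^ 2) / 2) ≤ ∫ s in a..b, f s := by
      have heq : (∫ s in a..b, (f a / (-a)) * (-s)) = (f a / (-a)) * ((a ^ 2 - b ^ 2) / 2) := by
        rw [intervalIntegral.integral_const_mul, intervalIntegral.integral_neg, integral_id]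
        ring
      rw [← heq]
      apply intervalIntegral.integral_mono_on hab.le
        ((continuous_const.mul continuous_neg).intervalIntegrable a b) (hint a b)
      intro s hs
      have hs0 : s < 0 := lt_of_le_of_lt hs.2 hb
      have hle : f a / |a| ≤ f s / |s| :=
        hmono.monotoneOn (ha.ne : a ≠ 0) (hs0.ne : s ≠ 0) hs.1
      rw [abs_of_neg hs0, abs_of_neg ha] at hle
      calc (f a / (-a)) * (-s) ≤ (f s / (-s)) * (-s) :=
            mul_le_mul_of_nonneg_right hle (by linarith)
        _ = f s := div_mul_cancel₀ _ (by linarith : (-s : ℝ) ≠ 0)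
    have hdiff : (∫ s in (0:ℝ)..b, f s) - ∫ s in (0:ℝ)..a, f s = ∫ s in a..b, f s :=
      intervalIntegral.integral_interval_sub_left (hint 0 b) (hint 0 a)
    have hfa : f a = (f a / (-a)) * (-a) := (div_mul_cancel₀ _ (by linarith : (-a:ℝ) ≠ 0)).symm
    have hfb : f b = (f b / (-b)) * (-b) := (div_mul_cancel₀ _ (by linarith : (-b:ℝ) ≠ 0)).symm
    have hgab : f a / (-a) < f b / (-b) := by
      have h := hmono (ha.ne : a ≠ 0) (hb.ne : b ≠ 0) hab
      simpa [abs_of_neg ha, abs_of_neg hb] using h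
    simp only
    nlinarith [mul_pos (mul_pos_of_neg_of_neg hb hb) (sub_pos.2 hgab)]
end

section
/- Let f : ℝ → ℝ be continuous with f(0)=0 such that t ↦ f(t)/|t| is strictly increasing on ℝ∖{0}, and let F(t)=∫_0^t f(s)ds. Then the map t ↦ F(t)/t² is strictly increasing on (0, ∞) and strictly decreasing on (−∞, 0). -/
/-!
Substituting `s = t u` gives `F(t)/t² = ∫₀¹ f(tu)/t du`, and for `u > 0` the integrand is
`± u · f(tu)/|tu|` (sign of `t`), so it is strictly monotone in `t` on each half-line.
-/

open MeasureTheory Set intervalIntegral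

theorem integral_div_sq_eq_integral_comp_mul (g : ℝ → ℝ) {t : ℝ} (ht : t ≠ 0) :
    (∫ s in (0 : ℝ)..t, g s) / t ^ 2 = ∫ u in (0 : ℝ)..1, g (t * u) / t := by
  rw [intervalIntegral.integral_div, integral_comp_mul_left g ht, mul_zero, mul_one, smul_eq_mul]
  field_simp

theorem integral_div_sq_lt_of_forall_lt {g : ℝ → ℝ} (hg : Continuous g) {a b : ℝ}
    (ha : a ≠ 0) (hb : b ≠ 0) (hlt : ∀ u ∈ Ioc (0 : ℝ) 1, g (a * u) / a < g (b * u) / b) :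
    (∫ s in (0 : ℝ)..a, g s) / a ^ 2 < (∫ s in (0 : ℝ)..b, g s) / b ^ 2 := by
  rw [integral_div_sq_eq_integral_comp_mul g ha, integral_div_sq_eq_integral_comp_mul g hb]
  exact integral_lt_integral_of_continuousOn_of_le_of_exists_lt one_pos
    (by fun_prop) (by fun_prop) (fun u hu => (hlt u hu).le) ⟨1, right_mem_Icc.2 zero_le_one,
      hlt 1 (right_mem_Ioc.2 one_pos)⟩

section

variable {f : ℝ → ℝ} (hmono : StrictMonoOn (fun t => f t / |t|) {t : ℝ | t ≠ 0})
include hmono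

theorem comp_mul_div_lt_of_pos {a b u : ℝ} (ha : 0 < a) (hab : a < b) (hu : 0 < u) :
    f (a * u) / a < f (b * u) / b := by
  have hau : 0 < a * u := mul_pos ha hu
  have hbu : 0 < b * u := mul_pos (ha.trans hab) hu
  have key := hmono hau.ne' hbu.ne' (mul_lt_mul_of_pos_right hab hu)
  simp only [abs_of_pos hau, abs_of_pos hbu] at key
  calc f (a * u) / a = u * (f (a * u) / (a * u)) := by field_simp
    _ < u * (f (b * u) / (b * u)) := mul_lt_mul_of_pos_left key hu
    _ = f (b * u) / b := by field_simp [(ha.trans hab).ne']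

theorem comp_mul_div_lt_of_neg {a b u : ℝ} (hb : b < 0) (hab : a < b) (hu : 0 < u) :
    f (b * u) / b < f (a * u) / a := by
  have hau : a * u < 0 := mul_neg_of_neg_of_pos (hab.trans hb) hu
  have hbu : b * u < 0 := mul_neg_of_neg_of_pos hb hu
  have key := hmono hau.ne hbu.ne (mul_lt_mul_of_pos_right hab hu)
  simp only [abs_of_neg hau, abs_of_neg hbu] at key
  calc f (b * u) / b = -u * (f (b * u) / -(b * u)) := by field_simp [hb.ne]
    _ < -u * (f (a * u) / -(a * u)) := mul_lt_mul_of_neg_left key (neg_neg_of_pos hu)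
    _ = f (a * u) / a := by field_simp [(hab.trans hb).ne]

end

theorem F_div_sq_mono_general (f : ℝ → ℝ) (hf : Continuous f)
    (hmono : StrictMonoOn (fun t => f t / |t|) {t : ℝ | t ≠ 0}) :
    StrictMonoOn (fun t => (∫ s in (0 : ℝ)..t, f s) / t ^ 2)
        (Set.Ioi (0 : ℝ)) ∧
    StrictAntiOn (fun t => (∫ s in (0 : ℝ)..t, f s) / t ^ 2)
        (Set.Iio (0 : ℝ)) :=
  ⟨fun _ ha _ hb hab => integral_div_sq_lt_of_forall_lt hf (ne_of_gt ha) (ne_of_gt hb)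
      fun _ hu => comp_mul_div_lt_of_pos hmono ha hab hu.1,
    fun _ ha _ hb hab => integral_div_sq_lt_of_forall_lt hf (ne_of_lt hb) (ne_of_lt ha)
      fun _ hu => comp_mul_div_lt_of_neg hmono hb hab hu.1⟩

/-- Lemma 2.3(ii): if `t ↦ f(t)/|t|` is strictly increasing on `ℝ ∖ {0}`, then
`t ↦ F(t)/t²` is strictly increasing on `(0,∞)` and strictly decreasing on
`(−∞,0)`, where `F(t) = ∫₀ᵗ f`. -/
theorem F_div_sq_mono (f : ℝ → ℝ) (hf : Continuous f) (hf0 : f 0 = 0)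
    (hmono : StrictMonoOn (fun t => f t / |t|) {t : ℝ | t ≠ 0}) :
    StrictMonoOn (fun t => (∫ s in (0 : ℝ)..t, f s) / t ^ 2)
        (Set.Ioi (0 : ℝ)) ∧
    StrictAntiOn (fun t => (∫ s in (0 : ℝ)..t, f s) / t ^ 2)
        (Set.Iio (0 : ℝ)) :=
  F_div_sq_mono_general f hf hmono
end

section
/- Let f : ℝ → ℝ be continuous with f(0)=0 such that t ↦ f(t)/|t| is strictly increasing on ℝ∖{0}, and F(t)=∫_0^t f(s)ds. Then f(t)/t > 2F(t)/t² for every t ≠ 0; equivalently, f(t)t > 2F(t) for all t ≠ 0. -/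
open MeasureTheory Filter Set Topology intervalIntegral

/-! Monotonicity of `f t / |t|` puts the graph of `f` strictly on one side of the chord
`s ↦ f t / t * s` between `0` and `t`; integrating, `∫₀ᵗ f` falls short of the chord's integral
`f t * t / 2`. -/

section ChordComparison

variable {f : ℝ → ℝ}

lemma lt_chord_of_strictMonoOn_div_abs (hmono : StrictMonoOn (fun t => f t / |t|) {t | t ≠ 0})
    {s t : ℝ} (hs : 0 < s) (hst : s < t) : f s < f t / t * s := by
  have ht : 0 < t := hs.trans hst
  have h := hmono hs.ne' ht.ne' hst
  simp only [abs_of_pos hs, abs_of_pos ht, div_lt_div_iff₀ hs ht] at h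
  rw [div_mul_eq_mul_div, lt_div_iff₀ ht]
  linarith

lemma chord_lt_of_strictMonoOn_div_abs (hmono : StrictMonoOn (fun t => f t / |t|) {t | t ≠ 0})
    {s t : ℝ} (hts : t < s) (hs : s < 0) : f t / t * s < f s := by
  have ht : t < 0 := hts.trans hs
  have h := hmono ht.ne hs.ne hts
  simp only [abs_of_neg hs, abs_of_neg ht, div_lt_div_iff₀ (neg_pos.2 ht) (neg_pos.2 hs)] at h
  rw [div_mul_eq_mul_div, div_lt_iff_of_neg ht]
  linarith

lemma two_mul_integral_lt_mul_self (hf : Continuous f)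
    (hmono : StrictMonoOn (fun t => f t / |t|) {t | t ≠ 0}) {t : ℝ} (ht : t ≠ 0) :
    2 * (∫ s in (0 : ℝ)..t, f s) < f t * t := by
  have hchord : ∫ s in (0 : ℝ)..t, f t / t * s = f t * t / 2 := by
    rw [intervalIntegral.integral_const_mul, integral_id]
    field_simp
    ring
  suffices 0 < ∫ s in (0 : ℝ)..t, (f t / t * s - f s) by
    rw [integral_sub ((continuous_const_mul _).intervalIntegrable _ _)
      (hf.intervalIntegrable _ _), hchord] at this
    linarith
  rcases ht.lt_or_gt with ht | ht
  · have hpos : 0 < ∫ s in t..0, (f s - f t / t * s) :=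
      intervalIntegral_pos_of_pos_on (Continuous.intervalIntegrable (by fun_prop) _ _)
        (fun s hs => sub_pos.2 (chord_lt_of_strictMonoOn_div_abs hmono hs.1 hs.2)) ht
    rw [integral_symm, ← intervalIntegral.integral_neg]
    simpa only [neg_sub] using hpos
  · exact intervalIntegral_pos_of_pos_on (Continuous.intervalIntegrable (by fun_prop) _ _)
      (fun s hs => sub_pos.2 (lt_chord_of_strictMonoOn_div_abs hmono hs.1 hs.2)) ht

end ChordComparison

theorem f_div_t_gt_general (f : ℝ → ℝ) (hf : Continuous f)
    (hmono : StrictMonoOn (fun t => f t / |t|) {t : ℝ | t ≠ 0}) :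
    ∀ t : ℝ, t ≠ 0 →
      2 * (∫ s in (0 : ℝ)..t, f s) / t ^ 2 < f t / t ∧
      2 * (∫ s in (0 : ℝ)..t, f s) < f t * t := by
  intro t ht
  have key := two_mul_integral_lt_mul_self hf hmono ht
  refine ⟨?_, key⟩
  have hft : f t / t = f t * t / t ^ 2 := by field_simp
  rw [hft]
  exact div_lt_div_of_pos_right key (by positivity)

/-- Lemma 2.3(iii): if `t ↦ f(t)/|t|` is strictly increasing on `ℝ ∖ {0}`, then
`f(t)/t > 2F(t)/t²` for every `t ≠ 0`; equivalently `f(t)t > 2F(t)` for `t ≠ 0`,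
where `F(t) = ∫₀ᵗ f`. -/
theorem f_div_t_gt (f : ℝ → ℝ) (hf : Continuous f) (hf0 : f 0 = 0)
    (hmono : StrictMonoOn (fun t => f t / |t|) {t : ℝ | t ≠ 0}) :
    ∀ t : ℝ, t ≠ 0 →
      2 * (∫ s in (0 : ℝ)..t, f s) / t ^ 2 < f t / t ∧
      2 * (∫ s in (0 : ℝ)..t, f s) < f t * t :=
  f_div_t_gt_general f hf hmono
end
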